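/- An n×n real matrix A is tropical totally nonnegative if and only if all of its 2×2 tropical minors are tropically nonnegative, that is, if and only if A_{i,j} + A_{i′,j′} ≥ A_{i,j′} + A_{i′,j} for all i < i′ and j < j′ (equivalently, −A is a Monge matrix); in symbols, TNtrop(ℝ) = TN₂trop(ℝ). -/

import Mathlib

open Finset

/-- Truncated predecessor in `Fin n` (1-indexed entry `i-1`). -/
def fpred {n : ℕ} (j : Fin n) : Fin n :=
  ⟨j.val - 1, Nat.lt_of_le_of_lt (Nat.sub_le _ _) j.isLt⟩

/-- `ψ(W)_{i,j}` is the tropical weight of the uppermost path from source `i`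
to target `j` in the canonical planar network `G_n`. -/
def psi (n : ℕ) (W : Matrix (Fin n) (Fin n) ℝ) : Matrix (Fin n) (Fin n) ℝ :=
  fun i j => if i ≤ j then ∑ t ∈ Finset.Icc i j, W i t else ∑ t ∈ Finset.Icc j i, W t j

/-- The map `φ`, inverse of `ψ`. -/
def phi (n : ℕ) (A : Matrix (Fin n) (Fin n) ℝ) : Matrix (Fin n) (Fin n) ℝ :=
  fun i j =>
    if i = j then A i j
    else if i < j then A i j - A i (fpred j)
    else A i j - A (fpred i) j

/-- Weak trapeze inequalities. -/
def WeakTrapeze (n : ℕ) (W : Matrix (Fin n) (Fin n) ℝ) : Prop :=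
  ∀ i : Fin n, 0 < i.val →
    W i (fpred i) + W (fpred i) (fpred i) + W (fpred i) i ≤ W i i

/-- Strict trapeze inequalities. -/
def StrictTrapeze (n : ℕ) (W : Matrix (Fin n) (Fin n) ℝ) : Prop :=
  ∀ i : Fin n, 0 < i.val →
    W i (fpred i) + W (fpred i) (fpred i) + W (fpred i) i < W i i

/-- Weak parallelogram inequalities. -/
def WeakPara (n : ℕ) (W : Matrix (Fin n) (Fin n) ℝ) : Prop :=
  ∀ i j : Fin n, ∀ _h : j.val + 2 ≤ i.val,
    W i j ≤ W i ⟨j.val + 1, by have := i.isLt; omega⟩ ∧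
    W j i ≤ W ⟨j.val + 1, by have := i.isLt; omega⟩ i

/-- Strict parallelogram inequalities. -/
def StrictPara (n : ℕ) (W : Matrix (Fin n) (Fin n) ℝ) : Prop :=
  ∀ i j : Fin n, ∀ _h : j.val + 2 ≤ i.val,
    W i j < W i ⟨j.val + 1, by have := i.isLt; omega⟩ ∧
    W j i < W ⟨j.val + 1, by have := i.isLt; omega⟩ i

/-- Maximum, over the permutations of sign `ε`, of the tropical weight of the
permutation in the `k × k` matrix `B` (computed in `WithBot ℝ`, the maximum over
the empty set being `⊥ = -∞`). -/
def tropPermSup (k : ℕ) (ε : ℤˣ) (B : Matrix (Fin k) (Fin k) (WithBot ℝ)) : WithBot ℝ :=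
  (Finset.univ.filter fun σ : Equiv.Perm (Fin k) => Equiv.Perm.sign σ = ε).sup
    fun σ => ∑ i, B i (σ i)

/-- Tropical total nonnegativity of a matrix over `ℝ ∪ {-∞}`. -/
def IsTropTN (n : ℕ) (A : Matrix (Fin n) (Fin n) (WithBot ℝ)) : Prop :=
  ∀ (k : ℕ) (r c : Fin k → Fin n), StrictMono r → StrictMono c →
    tropPermSup k (-1) (A.submatrix r c) ≤ tropPermSup k 1 (A.submatrix r c)

/-- Tropical total positivity of a real matrix. -/
def IsTropTP (n : ℕ) (A : Matrix (Fin n) (Fin n) ℝ) : Prop :=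
  ∀ (k : ℕ), 2 ≤ k → ∀ (r c : Fin k → Fin n), StrictMono r → StrictMono c →
    tropPermSup k (-1) ((A.map ((↑) : ℝ → WithBot ℝ)).submatrix r c) <
      tropPermSup k 1 ((A.map ((↑) : ℝ → WithBot ℝ)).submatrix r c)

/-- Max-plus matrix product. -/
def tropMul {l m p : ℕ} (A : Matrix (Fin l) (Fin m) (WithBot ℝ))
    (B : Matrix (Fin m) (Fin p) (WithBot ℝ)) : Matrix (Fin l) (Fin p) (WithBot ℝ) :=
  fun i j => Finset.univ.sup fun k => A i k + B k j

/-- Tropical identity matrix. -/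
def tropId (n : ℕ) : Matrix (Fin n) (Fin n) (WithBot ℝ) :=
  fun i j => if i = j then 0 else ⊥

/-- Tropical elementary Jacobi matrix `x_i(s)` (0-indexed: `s` in position `(i, i+1)`). -/
def xUp (n : ℕ) (i : ℕ) (s : ℝ) : Matrix (Fin n) (Fin n) (WithBot ℝ) :=
  fun a b => if a = b then 0 else if a.val = i ∧ b.val = i + 1 then (s : WithBot ℝ) else ⊥

/-- Tropical elementary Jacobi matrix `x̄_i(s)` (0-indexed: `s` in position `(i+1, i)`). -/
def xLow (n : ℕ) (i : ℕ) (s : ℝ) : Matrix (Fin n) (Fin n) (WithBot ℝ) :=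
  fun a b => if a = b then 0 else if a.val = i + 1 ∧ b.val = i then (s : WithBot ℝ) else ⊥

/-- Tropical elementary Jacobi matrix `x∘_i(s)` (0-indexed diagonal matrix,
`s` in position `(i, i)`). -/
def xDiag (n : ℕ) (i : ℕ) (s : ℝ) : Matrix (Fin n) (Fin n) (WithBot ℝ) :=
  fun a b => if a = b then (if a.val = i then (s : WithBot ℝ) else 0) else ⊥

/-- Entry of `W` looked up with natural-number (0-based) indices. -/
def wnat (n : ℕ) (W : Matrix (Fin n) (Fin n) ℝ) (a b : ℕ) : ℝ :=
  if h : a < n ∧ b < n then W ⟨a, h.1⟩ ⟨b, h.2⟩ else 0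

/-- The left part `L(W)` of the canonical planar network:
`L(W) = ⊙_{k=1}^{n−1} ⊙_{t=1}^{k} x̄_{n−k+t−1}(W_{n−k+t, t})` (1-indexed). -/
def Lmat (n : ℕ) (W : Matrix (Fin n) (Fin n) ℝ) : Matrix (Fin n) (Fin n) (WithBot ℝ) :=
  ((List.range (n - 1)).flatMap fun k => (List.range (k + 1)).map fun t =>
      xLow n (n - k + t - 2) (wnat n W (n - k + t - 1) t)).foldl tropMul (tropId n)

/-- The diagonal part `D(W) = x∘_1(W_{1,1}) ⊙ ⋯ ⊙ x∘_n(W_{n,n})` (1-indexed). -/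
def Dmat (n : ℕ) (W : Matrix (Fin n) (Fin n) ℝ) : Matrix (Fin n) (Fin n) (WithBot ℝ) :=
  ((List.range n).map fun i => xDiag n i (wnat n W i i)).foldl tropMul (tropId n)

/-- The tropical transfer matrix of the canonical totally connected planar
network `G_n` with weight matrix `W`: `T(W) = L(W) ⊙ D(W) ⊙ (L(Wᵀ))ᵀ`. -/
def Tmat (n : ℕ) (W : Matrix (Fin n) (Fin n) ℝ) : Matrix (Fin n) (Fin n) (WithBot ℝ) :=
  tropMul (tropMul (Lmat n W) (Dmat n W)) (Matrix.transpose (Lmat n W.transpose))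

/-!
Taking `k = 2` shows that the 2 × 2 condition is necessary. Conversely, if every 2 × 2 tropical
minor is nonnegative, so is that of every submatrix, and for such a matrix the identity is an
optimal assignment: if `x` is the least point moved by `σ`, uncrossing the two pairs
`(x, σ x)` and `(σ⁻¹ x, x)` does not decrease the weight and fixes one more point. Hence the
maximum over odd permutations is at most the diagonal weight, which is attained by the even
permutation `1`.
-/

/-- `B` is an inverse Monge matrix (`-B` is Monge): all 2 × 2 tropical minors of `B` are
tropically nonnegative. -/
def IsInverseMonge {ι κ R : Type*} [LT ι] [LT κ] [Add R] [LE R] (B : Matrix ι κ R) : Prop :=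
  ∀ ⦃i i' : ι⦄ ⦃j j' : κ⦄, i < i' → j < j' → B i j' + B i' j ≤ B i j + B i' j'

theorem IsInverseMonge.submatrix {ι κ ι' κ' R : Type*} [Preorder ι] [Preorder κ]
    [Preorder ι'] [Preorder κ'] [Add R] [LE R] {B : Matrix ι κ R} (hB : IsInverseMonge B)
    {r : ι' → ι} {c : κ' → κ} (hr : StrictMono r) (hc : StrictMono c) :
    IsInverseMonge (B.submatrix r c) :=
  fun _ _ _ _ hi hj => hB (hr hi) (hc hj)

theorem IsInverseMonge.map_coe {ι κ : Type*} [LT ι] [LT κ] {A : Matrix ι κ ℝ}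
    (hA : IsInverseMonge A) : IsInverseMonge (A.map ((↑) : ℝ → WithBot ℝ)) :=
  fun _ _ _ _ hi hj => by
    simpa only [Matrix.map_apply, ← WithBot.coe_add, WithBot.coe_le_coe] using hA hi hj

section Rearrangement

variable {ι R : Type*} [Fintype ι] [AddCommMonoid R] [PartialOrder R] [IsOrderedAddMonoid R]

theorem Fintype.sum_le_sum_of_eq_off_pair [DecidableEq ι] {f g : ι → R} {a b : ι}
    (hab : a ≠ b) (hfg : ∀ x, x ≠ a → x ≠ b → f x = g x) (h : f a + f b ≤ g a + g b) :
    ∑ x, f x ≤ ∑ x, g x := by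
  have hb : b ∈ univ.erase a := mem_erase.2 ⟨hab.symm, mem_univ b⟩
  rw [← add_sum_erase _ _ (mem_univ a), ← add_sum_erase _ _ hb,
    ← add_sum_erase _ _ (mem_univ a), ← add_sum_erase _ _ hb, ← add_assoc, ← add_assoc,
    Finset.sum_congr rfl fun x hx =>
      hfg x (ne_of_mem_erase (mem_of_mem_erase hx)) (ne_of_mem_erase hx)]
  exact add_le_add_left h _

variable [LinearOrder ι] {B : Matrix ι ι R}

theorem IsInverseMonge.sum_perm_le_sum_swap_mul (hB : IsInverseMonge B) {σ : Equiv.Perm ι}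
    {x : ι} (hx : σ x ≠ x) (hmin : ∀ y, σ y ≠ y → x ≤ y) :
    ∑ i, B i (σ i) ≤ ∑ i, B i ((Equiv.swap x (σ x) * σ) i) := by
  set p := σ.symm x
  have hσp : σ p = x := σ.apply_symm_apply x
  have hpx : p ≠ x := fun h => hx (h ▸ hσp)
  have hxσx : x < σ x := (hmin _ (σ.injective.ne hx)).lt_of_ne hx.symm
  have hxp : x < p := (hmin p (hσp ▸ hpx.symm)).lt_of_ne hpx.symm
  refine Fintype.sum_le_sum_of_eq_off_pair hpx.symm (fun y hyx hyp => ?_) ?_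
  · have hσy : σ y ≠ x := hσp ▸ σ.injective.ne hyp
    rw [Equiv.Perm.mul_apply, Equiv.swap_apply_of_ne_of_ne hσy (σ.injective.ne hyx)]
  · simpa [hσp, add_comm] using hB hxp hxσx

theorem IsInverseMonge.sum_perm_le_sum_diag (hB : IsInverseMonge B) (σ : Equiv.Perm ι) :
    ∑ i, B i (σ i) ≤ ∑ i, B i i := by
  induction h : σ.support.card using Nat.strong_induction_on generalizing σ with
  | _ m ih =>
  rcases σ.support.eq_empty_or_nonempty with hσ | hσ
  · simp [Equiv.Perm.support_eq_empty_iff.1 hσ]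
  have hx : σ (σ.support.min' hσ) ≠ σ.support.min' hσ :=
    Equiv.Perm.mem_support.1 (σ.support.min'_mem hσ)
  calc ∑ i, B i (σ i) ≤ _ := hB.sum_perm_le_sum_swap_mul hx fun y hy =>
        σ.support.min'_le y (Equiv.Perm.mem_support.2 hy)
    _ ≤ ∑ i, B i i := ih _ (h ▸ Equiv.Perm.card_support_swap_mul hx) _ rfl

end Rearrangement

theorem tropPermSup_le_sum_diag {k : ℕ} (ε : ℤˣ) {B : Matrix (Fin k) (Fin k) (WithBot ℝ)}
    (hB : IsInverseMonge B) : tropPermSup k ε B ≤ ∑ i, B i i :=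
  Finset.sup_le fun σ _ => hB.sum_perm_le_sum_diag σ

theorem sum_diag_le_tropPermSup_one {k : ℕ} (B : Matrix (Fin k) (Fin k) (WithBot ℝ)) :
    ∑ i, B i i ≤ tropPermSup k 1 B :=
  Finset.le_sup (f := fun σ : Equiv.Perm (Fin k) => ∑ i, B i (σ i)) (s := univ.filter _)
    (b := 1) (mem_filter.2 ⟨mem_univ _, Equiv.Perm.sign_one⟩)

theorem tropPermSup_two_one (B : Matrix (Fin 2) (Fin 2) (WithBot ℝ)) :
    tropPermSup 2 1 B = B 0 0 + B 1 1 := by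
  have : (univ.filter fun σ : Equiv.Perm (Fin 2) => Equiv.Perm.sign σ = 1) = {1} := by decide
  simp [tropPermSup, this]

theorem tropPermSup_two_neg_one (B : Matrix (Fin 2) (Fin 2) (WithBot ℝ)) :
    tropPermSup 2 (-1) B = B 0 1 + B 1 0 := by
  have : (univ.filter fun σ : Equiv.Perm (Fin 2) => Equiv.Perm.sign σ = -1) =
      {Equiv.swap 0 1} := by decide
  simp [tropPermSup, this]

/-- a real matrix is tropical totally nonnegative iff all its
2×2 tropical minors are tropically nonnegative (`TNtrop(ℝ) = TN₂trop(ℝ)`). -/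
theorem TN_iff_two_by_two_minors (n : ℕ) (A : Matrix (Fin n) (Fin n) ℝ) :
    IsTropTN n (A.map ((↑) : ℝ → WithBot ℝ)) ↔
      ∀ i i' j j' : Fin n, i < i' → j < j' →
        A i j' + A i' j ≤ A i j + A i' j' := by
  refine ⟨fun hTN i i' j j' hi hj => ?_, fun hA k r c hr hc => ?_⟩
  · have h := hTN 2 ![i, i'] ![j, j']
      (strictMono_vecCons.2 ⟨hi, Subsingleton.strictMono (α := Fin 1) _⟩)
      (strictMono_vecCons.2 ⟨hj, Subsingleton.strictMono (α := Fin 1) _⟩)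
    rw [tropPermSup_two_neg_one, tropPermSup_two_one] at h
    simpa [← WithBot.coe_add] using h
  · have hM : IsInverseMonge A := fun i i' j j' => hA i i' j j'
    exact (tropPermSup_le_sum_diag _ (hM.map_coe.submatrix hr hc)).trans
      (sum_diag_le_tropPermSup_one _)
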